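/- Let α ∈ P be a Laurent polynomial that is not a constant, and consider the module M_{α,1/2}. Set S₁* = span_ℂ{(α+n)·tⁿ : n ∈ ℤ} ⊆ P (equivalently, S₁* is the image of P under the map α+D). Then: (i) the pair (P, S₁*) is invariant for M_{α,1/2}; (ii) S₁* ≠ P; (iii) every invariant pair (S₀,S₁) for M_{α,1/2} with (S₀,S₁) ≠ ({0},{0}) satisfies P ⊆ S₀ and S₁* ⊆ S₁, so (P, S₁*) is the unique minimal nonzero submodule; (iv) for all (f,g) ∈ W and m ∈ ℤ, both L_m(f,g) and G_m(f,g) lie in P × S₁*, so the induced action of all operators on the quotient W/(P × S₁*) is trivial. -/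

import Mathlib

/-! For `b = 1/2` the identity `(α + D)(tᵐ h) = tᵐ (α + D + m) h` shows that the odd components of
`L_m` and `G_m` are always of the form `tᵐ (α + D + m) h`, hence lie in `S₁* = (α + D) P`.

For an invariant pair, `G_s (0, g)` and `G_m (f, 0)` give `tˢ S₁ ⊆ S₀` and `tᵐ (α + D + m) S₀ ⊆ S₁`;
composing them and subtracting the cases `m = 1` and `m = 0` shows that `S₀` is an ideal stable
under `D`. As `D` acts on the monomials with pairwise distinct eigenvalues, a polynomial in `D`
isolates any monomial of an element of `S₀`, so `S₀ ≠ 0` forces `S₀ = P`, and then `S₁ ⊇ S₁*`.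

If `α` has a nonzero coefficient at some `n > 0`, comparing the extreme coefficients of
`(α + D) h = tᵏ` shows that the constant term of `α` is `-m` for an integer `m ≤ k - n`, so
`tᵏ ∉ S₁*` for small `k`; the case `n < 0` reduces to this one through `t ↦ t⁻¹`, which turns `D`
into `-D`. -/

open LaurentPolynomial

noncomputable section

abbrev Lp := LaurentPolynomial ℂ

/-- `L_m(f,g) = (t^m(α+D+mb)f, t^m(α+D+m(b+1/2))g)` -/
def Lop (D : Lp →ₗ[ℂ] Lp) (α : Lp) (b : ℂ) (m : ℤ) : Lp × Lp → Lp × Lp :=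
  fun w => (T m * (α * w.1 + D w.1 + ((m : ℂ) * b) • w.1),
            T m * (α * w.2 + D w.2 + ((m : ℂ) * (b + 1 / 2)) • w.2))

/-- `G_m(f,g) = (−t^m g, t^m(α+D+2mb)f)` -/
def Gop (D : Lp →ₗ[ℂ] Lp) (α : Lp) (b : ℂ) (m : ℤ) : Lp × Lp → Lp × Lp :=
  fun w => (-(T m * w.2), T m * (α * w.1 + D w.1 + (2 * (m : ℂ) * b) • w.1))

/-- `(S₀, S₁)` is an invariant pair for `M_{α,b}`. -/
def RInv (D : Lp →ₗ[ℂ] Lp) (α : Lp) (b : ℂ) (S₀ S₁ : Submodule ℂ Lp) : Prop :=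
  ∀ m : ℤ, ∀ f ∈ S₀, ∀ g ∈ S₁,
    (Lop D α b m (f, g)).1 ∈ S₀ ∧ (Lop D α b m (f, g)).2 ∈ S₁ ∧
    (Gop D α b m (f, g)).1 ∈ S₀ ∧ (Gop D α b m (f, g)).2 ∈ S₁

/-- `S₁*`, the image of `P` under `α + D` (acting as multiplication by `α` plus `D`);
equivalently, the span of the elements `(α+n)·tⁿ`, `n ∈ ℤ`. -/
def S1star (D : Lp →ₗ[ℂ] Lp) (α : Lp) : Submodule ℂ Lp :=
  LinearMap.range (LinearMap.mulLeft ℂ α + D)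

namespace LaurentPolynomial

section Semiring

variable {R : Type*} [Semiring R]

theorem coeff_T (n k : ℤ) : (T n : R[T;T⁻¹]).coeff k = if n = k then 1 else 0 :=
  Finsupp.single_apply

theorem coeff_C (c : R) (k : ℤ) : (C c : R[T;T⁻¹]).coeff k = if 0 = k then c else 0 :=
  Finsupp.single_apply

theorem coeff_T_mul (m k : ℤ) (f : R[T;T⁻¹]) : (T m * f).coeff k = f.coeff (k - m) := by
  rw [T, AddMonoidAlgebra.coeff_single_mul_apply, one_mul, neg_add_eq_sub]

theorem exists_coeff_ne_zero_forall_le {f : R[T;T⁻¹]} (hf : f ≠ 0) :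
    ∃ d, f.coeff d ≠ 0 ∧ ∀ j, f.coeff j ≠ 0 → j ≤ d := by
  have hs : f.coeff.support.Nonempty := by simpa using hf
  exact ⟨_, Finsupp.mem_support_iff.mp (f.coeff.support.max'_mem hs),
    fun j hj => f.coeff.support.le_max' j (Finsupp.mem_support_iff.mpr hj)⟩

theorem exists_coeff_ne_zero_forall_ge {f : R[T;T⁻¹]} (hf : f ≠ 0) :
    ∃ d, f.coeff d ≠ 0 ∧ ∀ j, f.coeff j ≠ 0 → d ≤ j := by
  have hs : f.coeff.support.Nonempty := by simpa using hf
  exact ⟨_, Finsupp.mem_support_iff.mp (f.coeff.support.min'_mem hs),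
    fun j hj => f.coeff.support.min'_le j (Finsupp.mem_support_iff.mpr hj)⟩

theorem coeff_mul_add_of_forall_le {f g : R[T;T⁻¹]} {a b : ℤ}
    (hf : ∀ i, f.coeff i ≠ 0 → i ≤ a) (hg : ∀ j, g.coeff j ≠ 0 → j ≤ b) :
    (f * g).coeff (a + b) = f.coeff a * g.coeff b :=
  AddMonoidAlgebra.coeff_mul_add_of_uniqueAdd fun i j hi hj hij => by
    have := hf i (Finsupp.mem_support_iff.mp hi)
    have := hg j (Finsupp.mem_support_iff.mp hj)
    omega

theorem coeff_mul_add_of_forall_ge {f g : R[T;T⁻¹]} {a b : ℤ}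
    (hf : ∀ i, f.coeff i ≠ 0 → a ≤ i) (hg : ∀ j, g.coeff j ≠ 0 → b ≤ j) :
    (f * g).coeff (a + b) = f.coeff a * g.coeff b :=
  AddMonoidAlgebra.coeff_mul_add_of_uniqueAdd fun i j hi hj hij => by
    have := hf i (Finsupp.mem_support_iff.mp hi)
    have := hg j (Finsupp.mem_support_iff.mp hj)
    omega

theorem exists_ne_zero_coeff_ne_zero {f : R[T;T⁻¹]} (hf : ∀ c : R, f ≠ C c) :
    ∃ n ≠ 0, f.coeff n ≠ 0 := by
  by_contra! h
  refine hf (f.coeff 0) (LaurentPolynomial.ext fun k => ?_)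
  rw [coeff_C]
  split_ifs with hk
  · rw [hk]
  · exact h k (Ne.symm hk)

end Semiring

section CommSemiring

variable {R : Type*} [CommSemiring R]

theorem mul_mem_of_forall_T_mul_mem {S : Submodule R R[T;T⁻¹]}
    (hS : ∀ f ∈ S, ∀ n, T n * f ∈ S) {f : R[T;T⁻¹]} (hf : f ∈ S) (p : R[T;T⁻¹]) :
    p * f ∈ S := by
  induction p using LaurentPolynomial.induction_on' with
  | add p q hp hq => rw [add_mul]; exact S.add_mem hp hq
  | C_mul_T n a => rw [← smul_eq_C_mul, smul_mul_assoc]; exact S.smul_mem a (hS f hf n)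

theorem eq_top_of_T_mem {S : Submodule R R[T;T⁻¹]}
    (hS : ∀ f ∈ S, ∀ n, T n * f ∈ S) {n : ℤ} (hn : T n ∈ S) : S = ⊤ := by
  refine eq_top_iff.mpr fun p _ => ?_
  have := mul_mem_of_forall_T_mul_mem hS hn (p * T (-n))
  rwa [mul_assoc, ← T_add, neg_add_cancel, T_zero, mul_one] at this

end CommSemiring

end LaurentPolynomial

section EulerOperator

variable {D : Lp →ₗ[ℂ] Lp}

theorem coeff_aeval_D (hD : ∀ n : ℤ, D (T n) = (n : ℂ) • T n) (p : Polynomial ℂ) (f : Lp)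
    (k : ℤ) : (Polynomial.aeval D p f).coeff k = p.eval (k : ℂ) * f.coeff k := by
  induction f using LaurentPolynomial.induction_on' with
  | add f g hf hg =>
    simp only [map_add, AddMonoidAlgebra.coeff_add, Finsupp.add_apply, hf, hg, mul_add]
  | C_mul_T n a =>
    rw [← smul_eq_C_mul, map_smul, Module.End.aeval_apply_of_mem_apply_eq_smul (hD n)]
    simp only [AddMonoidAlgebra.coeff_smul_apply, coeff_T, smul_eq_mul]
    split_ifs with h
    · rw [h]; ring
    · simp

theorem coeff_D (hD : ∀ n : ℤ, D (T n) = (n : ℂ) • T n) (f : Lp) (k : ℤ) :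
    (D f).coeff k = k * f.coeff k := by
  simpa using coeff_aeval_D hD Polynomial.X f k

theorem D_T_mul (hD : ∀ n : ℤ, D (T n) = (n : ℂ) • T n) (m : ℤ) (f : Lp) :
    D (T m * f) = T m * D f + (m : ℂ) • (T m * f) := by
  refine LaurentPolynomial.ext fun k => ?_
  simp only [AddMonoidAlgebra.coeff_add, Finsupp.add_apply, AddMonoidAlgebra.coeff_smul_apply,
    coeff_D hD, coeff_T_mul, smul_eq_mul]
  push_cast
  ring

theorem D_invert (hD : ∀ n : ℤ, D (T n) = (n : ℂ) • T n) (f : Lp) :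
    D (invert f) = -invert (D f) := by
  refine LaurentPolynomial.ext fun k => ?_
  simp only [coeff_D hD, invert_apply, AddMonoidAlgebra.coeff_neg, Finsupp.neg_apply]
  push_cast
  ring

theorem aeval_D_mem {S : Submodule ℂ Lp} (hS : ∀ f ∈ S, D f ∈ S) (p : Polynomial ℂ) {f : Lp}
    (hf : f ∈ S) : Polynomial.aeval D p f ∈ S := by
  induction p using Polynomial.induction_on generalizing f with
  | C a => simpa [Module.algebraMap_end_apply] using S.smul_mem a hf
  | add p q hp hq => simpa using S.add_mem (hp hf) (hq hf)
  | monomial n a ih =>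
    rw [pow_succ, ← mul_assoc, map_mul, Module.End.mul_apply, Polynomial.aeval_X]
    exact ih (hS f hf)

theorem T_mem_of_coeff_ne_zero (hD : ∀ n : ℤ, D (T n) = (n : ℂ) • T n) {S : Submodule ℂ Lp}
    (hS : ∀ f ∈ S, D f ∈ S) {f : Lp} (hf : f ∈ S) {n : ℤ} (hn : f.coeff n ≠ 0) : T n ∈ S := by
  set p : Polynomial ℂ := ∏ j ∈ f.coeff.support.erase n, (Polynomial.X - Polynomial.C (j : ℂ))
  have hp : p.eval (n : ℂ) ≠ 0 := by
    simp only [p, Polynomial.eval_prod, Polynomial.eval_sub, Polynomial.eval_X,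
      Polynomial.eval_C]
    refine Finset.prod_ne_zero_iff.mpr fun j hj => sub_ne_zero.mpr ?_
    exact_mod_cast (Finset.ne_of_mem_erase hj).symm
  have hproj : Polynomial.aeval D p f = (p.eval (n : ℂ) * f.coeff n) • T n := by
    refine LaurentPolynomial.ext fun k => ?_
    rw [coeff_aeval_D hD, AddMonoidAlgebra.coeff_smul_apply, coeff_T, smul_eq_mul]
    split_ifs with hk
    · rw [hk, mul_one]
    by_cases hfk : f.coeff k = 0
    · rw [hfk, mul_zero, mul_zero]
    have hk' : k ∈ f.coeff.support.erase n :=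
      Finset.mem_erase.mpr ⟨Ne.symm hk, Finsupp.mem_support_iff.mpr hfk⟩
    simp only [p, Polynomial.eval_prod, Polynomial.eval_sub, Polynomial.eval_X,
      Polynomial.eval_C, mul_zero]
    exact mul_eq_zero_of_left (Finset.prod_eq_zero hk' (sub_self (k : ℂ))) _
  have := S.smul_mem (p.eval (n : ℂ) * f.coeff n)⁻¹ (aeval_D_mem hS p hf)
  rwa [hproj, smul_smul, inv_mul_cancel₀ (mul_ne_zero hp hn), one_smul] at this

theorem exists_coeff_zero_eq_neg_of_pos (hD : ∀ n : ℤ, D (T n) = (n : ℂ) • T n) {α h : Lp}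
    {k n : ℤ} (hn : 0 < n) (hαn : α.coeff n ≠ 0) (heq : α * h + D h = T k) :
    ∃ m : ℤ, α.coeff 0 = -m ∧ m ≤ k - n := by
  have hcoeff (x : ℤ) : (α * h).coeff x + x * h.coeff x = (T k).coeff x := by
    rw [← coeff_D hD, ← Finsupp.add_apply, ← AddMonoidAlgebra.coeff_add, heq]
  have hh : h ≠ 0 := by
    rintro rfl
    exact (isUnit_T k).ne_zero (by simpa using heq.symm)
  have hα : α ≠ 0 := by rintro rfl; exact hαn rfl
  obtain ⟨d, hd, hd_top⟩ := exists_coeff_ne_zero_forall_le hh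
  obtain ⟨m, hm, hm_bot⟩ := exists_coeff_ne_zero_forall_ge hh
  obtain ⟨N, hN, hN_top⟩ := exists_coeff_ne_zero_forall_le hα
  obtain ⟨M, hM, hM_bot⟩ := exists_coeff_ne_zero_forall_ge hα
  have hnN := hN_top n hαn
  have hmd := hd_top m hm
  have hk : k = N + d := by
    by_contra hne
    have hNd : h.coeff (N + d) = 0 := by by_contra hx; have := hd_top _ hx; omega
    have := hcoeff (N + d)
    rw [coeff_mul_add_of_forall_le hN_top hd_top, hNd, mul_zero, add_zero, coeff_T,
      if_neg hne] at this
    exact mul_ne_zero hN hd this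
  rcases lt_or_ge M 0 with hM0 | hM0
  · have hMm : h.coeff (M + m) = 0 := by by_contra hx; have := hm_bot _ hx; omega
    have := hcoeff (M + m)
    rw [coeff_mul_add_of_forall_ge hM_bot hm_bot, hMm, mul_zero, add_zero, coeff_T,
      if_neg (by omega)] at this
    exact absurd this (mul_ne_zero hM hm)
  · have := hcoeff (0 + m)
    rw [coeff_mul_add_of_forall_ge (fun i hi => hM0.trans (hM_bot i hi)) hm_bot, coeff_T,
      if_neg (by omega), zero_add, ← add_mul] at this
    exact ⟨m, eq_neg_of_add_eq_zero_left ((mul_eq_zero.mp this).resolve_right hm), by omega⟩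

theorem exists_coeff_zero_eq_neg_of_neg (hD : ∀ n : ℤ, D (T n) = (n : ℂ) • T n) {α h : Lp}
    {k n : ℤ} (hn : n < 0) (hαn : α.coeff n ≠ 0) (heq : α * h + D h = T k) :
    ∃ m : ℤ, α.coeff 0 = -m ∧ k - n ≤ m := by
  have heq' : -invert α * -invert h + D (-invert h) = T (-k) := by
    rw [neg_mul_neg, map_neg, D_invert hD, neg_neg, ← map_mul, ← map_add, heq, invert_T]
  obtain ⟨m, hm, hle⟩ := exists_coeff_zero_eq_neg_of_pos hD (n := -n) (by omega)
    (by simpa using hαn) heq'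
  exact ⟨-m, by simpa using hm, by omega⟩

theorem S1star_ne_top (hD : ∀ n : ℤ, D (T n) = (n : ℂ) • T n) {α : Lp}
    (hα : ∀ c : ℂ, α ≠ C c) : S1star D α ≠ ⊤ := by
  intro htop
  have hsurj (k : ℤ) : ∃ h, α * h + D h = T k :=
    LinearMap.mem_range.mp (htop ▸ Submodule.mem_top : T k ∈ S1star D α)
  obtain ⟨n, hn0, hαn⟩ := exists_ne_zero_coeff_ne_zero hα
  rcases hn0.lt_or_gt with hn | hn
  · obtain ⟨m₀, hm₀, -⟩ := exists_coeff_zero_eq_neg_of_neg hD hn hαn (hsurj 0).choose_spec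
    obtain ⟨m₁, hm₁, hle⟩ :=
      exists_coeff_zero_eq_neg_of_neg hD hn hαn (hsurj (n + m₀ + 1)).choose_spec
    have : m₁ = m₀ := by exact_mod_cast neg_injective (hm₁.symm.trans hm₀)
    omega
  · obtain ⟨m₀, hm₀, -⟩ := exists_coeff_zero_eq_neg_of_pos hD hn hαn (hsurj 0).choose_spec
    obtain ⟨m₁, hm₁, hle⟩ :=
      exists_coeff_zero_eq_neg_of_pos hD hn hαn (hsurj (n + m₀ - 1)).choose_spec
    have : m₁ = m₀ := by exact_mod_cast neg_injective (hm₁.symm.trans hm₀)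
    omega

theorem T_mul_mem_S1star (hD : ∀ n : ℤ, D (T n) = (n : ℂ) • T n) (α : Lp) (m : ℤ) (f : Lp) :
    T m * (α * f + D f + (m : ℂ) • f) ∈ S1star D α := by
  refine ⟨T m * f, ?_⟩
  rw [LinearMap.add_apply, LinearMap.mulLeft_apply, D_T_mul hD, mul_add, mul_add,
    mul_smul_comm, mul_left_comm]
  abel

theorem Lop_snd_mem_S1star (hD : ∀ n : ℤ, D (T n) = (n : ℂ) • T n) (α : Lp) (m : ℤ)
    (w : Lp × Lp) : (Lop D α (1 / 2) m w).2 ∈ S1star D α := by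
  rw [Lop, show (m : ℂ) * (1 / 2 + 1 / 2) = m by ring]
  exact T_mul_mem_S1star hD α m w.2

theorem Gop_snd_mem_S1star (hD : ∀ n : ℤ, D (T n) = (n : ℂ) • T n) (α : Lp) (m : ℤ)
    (w : Lp × Lp) : (Gop D α (1 / 2) m w).2 ∈ S1star D α := by
  rw [Gop, show 2 * (m : ℂ) * (1 / 2) = m by ring]
  exact T_mul_mem_S1star hD α m w.1

end EulerOperator

namespace RInv

variable {D : Lp →ₗ[ℂ] Lp} {α : Lp} {S₀ S₁ : Submodule ℂ Lp}

theorem T_mul_mem_fst {b : ℂ} (hS : RInv D α b S₀ S₁) {g : Lp} (hg : g ∈ S₁) (s : ℤ) :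
    T s * g ∈ S₀ := by
  simpa [Gop] using S₀.neg_mem (hS s 0 S₀.zero_mem g hg).2.2.1

theorem T_mul_mem_snd (hS : RInv D α (1 / 2) S₀ S₁) {f : Lp} (hf : f ∈ S₀) (m : ℤ) :
    T m * (α * f + D f + (m : ℂ) • f) ∈ S₁ := by
  have := (hS m f hf 0 S₁.zero_mem).2.2.2
  rwa [Gop, show 2 * (m : ℂ) * (1 / 2) = m by ring] at this

theorem T_mul_add_smul_mem (hS : RInv D α (1 / 2) S₀ S₁) {f : Lp} (hf : f ∈ S₀) (u m : ℤ) :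
    T u * (α * f + D f + (m : ℂ) • f) ∈ S₀ := by
  have := hS.T_mul_mem_fst (hS.T_mul_mem_snd hf m) (u - m)
  rwa [← mul_assoc, ← T_add, sub_add_cancel] at this

theorem T_mul_mem (hS : RInv D α (1 / 2) S₀ S₁) {f : Lp} (hf : f ∈ S₀) (u : ℤ) :
    T u * f ∈ S₀ := by
  have := S₀.sub_mem (hS.T_mul_add_smul_mem hf u 1) (hS.T_mul_add_smul_mem hf u 0)
  rwa [← mul_sub, Int.cast_one, Int.cast_zero, one_smul, zero_smul, add_zero,
    add_sub_cancel_left] at this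

theorem D_mem (hS : RInv D α (1 / 2) S₀ S₁) {f : Lp} (hf : f ∈ S₀) : D f ∈ S₀ := by
  have := S₀.sub_mem (hS.T_mul_add_smul_mem hf 0 0)
    (mul_mem_of_forall_T_mul_mem (fun _ hg => hS.T_mul_mem hg) hf α)
  rwa [T_zero, one_mul, Int.cast_zero, zero_smul, add_zero, add_sub_cancel_left] at this

theorem eq_top (hD : ∀ n : ℤ, D (T n) = (n : ℂ) • T n) (hS : RInv D α (1 / 2) S₀ S₁)
    (hne : ¬(S₀ = ⊥ ∧ S₁ = ⊥)) : S₀ = ⊤ := by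
  have hS₀ : S₀ ≠ ⊥ := fun hbot => hne ⟨hbot, eq_bot_iff.mpr fun g hg => by
    simpa [hbot] using hS.T_mul_mem_fst hg 0⟩
  obtain ⟨f, hf, hf0⟩ := Submodule.exists_mem_ne_zero_of_ne_bot hS₀
  obtain ⟨n, hn, -⟩ := exists_coeff_ne_zero_forall_le hf0
  exact eq_top_of_T_mem (fun _ hg => hS.T_mul_mem hg)
    (T_mem_of_coeff_ne_zero hD (fun _ hg => hS.D_mem hg) hf hn)

theorem S1star_le (hS : RInv D α (1 / 2) ⊤ S₁) : S1star D α ≤ S₁ := by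
  rintro _ ⟨f, rfl⟩
  simpa using hS.T_mul_mem_snd Submodule.mem_top 0

end RInv

theorem stmt6 (D : Lp →ₗ[ℂ] Lp)
    (hD : ∀ n : ℤ, D (T n) = (n : ℂ) • T n)
    (α : Lp) (hα : ∀ c : ℂ, α ≠ C c) :
    RInv D α (1 / 2) ⊤ (S1star D α) ∧
    S1star D α ≠ ⊤ ∧
    (∀ S₀ S₁ : Submodule ℂ Lp, RInv D α (1 / 2) S₀ S₁ → ¬(S₀ = ⊥ ∧ S₁ = ⊥) →
      S₀ = ⊤ ∧ S1star D α ≤ S₁) ∧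
    (∀ m : ℤ, ∀ w : Lp × Lp,
      (Lop D α (1 / 2) m w).2 ∈ S1star D α ∧ (Gop D α (1 / 2) m w).2 ∈ S1star D α) := by
  refine ⟨fun m f _ g _ => ⟨Submodule.mem_top, Lop_snd_mem_S1star hD α m (f, g),
      Submodule.mem_top, Gop_snd_mem_S1star hD α m (f, g)⟩,
    S1star_ne_top hD hα, fun S₀ S₁ hS hne => ?_,
    fun m w => ⟨Lop_snd_mem_S1star hD α m w, Gop_snd_mem_S1star hD α m w⟩⟩
  obtain rfl := hS.eq_top hD hne
  exact ⟨rfl, hS.S1star_le⟩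

end
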